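/- Let d ≥ 1, E := ℝ^d × ℝ^d with the Euclidean inner product, J : E → E the linear map J(q,p) = (p,−q), g : ℝ → ℝ twice continuously differentiable, and f : E → E the Euclidean Hamiltonian vector field f(u) = g(‖u‖²/2) • J u. Apply an explicit s-stage Runge–Kutta method with strictly lower triangular coefficients a and weights b satisfying the second-order conditions Σ_i b_i = 1 and Σ_i b_i c_i = 1/2 (where c_i := Σ_j a_{ij}) to f with initial value u₀ and step size h, producing update u₊(h). Then, as h → 0, 2‖u₀‖² − 2⟨u₊(h), u₀⟩ = g(‖u₀‖²/2)² ‖u₀‖² h² + O(h³). -/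

import Mathlib

open scoped RealInnerProductSpace
open Asymptotics Filter Topology

noncomputable section

/-- The phase space `E = ℝ^d × ℝ^d`, equipped with the Euclidean inner product. -/
abbrev E (d : ℕ) : Type :=
  WithLp 2 (EuclideanSpace ℝ (Fin d) × EuclideanSpace ℝ (Fin d))

/-- The canonical symplectic rotation `J(q,p) = (p, -q)`. -/
def J (d : ℕ) (u : E d) : E d := WithLp.toLp 2 (u.ofLp.2, -u.ofLp.1)

/-!
Since `f(u) ⟂ u`, each stage satisfies `⟪f(yᵢ), u₀⟫ = ⟪f(yᵢ), u₀ - yᵢ⟫ = -h ∑ⱼ aᵢⱼ ⟪f(yᵢ), f(yⱼ)⟫`,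
so the numerator is exactly `2h² S(h)` with `S(h) = ∑ᵢⱼ bᵢ aᵢⱼ ⟪f(yᵢ), f(yⱼ)⟫`. The stages of an
explicit method are differentiable in `h`, hence so is `S`, and `S(0) = ‖f(u₀)‖² ∑ᵢ bᵢcᵢ = ‖f(u₀)‖²/2`.
-/

section RungeKutta

variable {F : Type*} {s : ℕ} {a : Fin s → Fin s → ℝ} {f : F → F}

theorem differentiable_explicit_rk_stage [NormedAddCommGroup F] [NormedSpace ℝ F]
    (hf : Differentiable ℝ f) (ha : ∀ i j : Fin s, i ≤ j → a i j = 0) {u₀ : F}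
    {y : ℝ → Fin s → F} (hy : ∀ (h : ℝ) (i : Fin s), y h i = u₀ + h • ∑ j, a i j • f (y h j))
    (i : Fin s) : Differentiable ℝ fun h => y h i := by
  induction i using WellFoundedLT.induction with
  | _ i ih =>
    rw [funext fun h => hy h i]
    refine (differentiable_const _).add
      (differentiable_id.smul (Differentiable.fun_sum fun j _ => ?_))
    rcases lt_or_ge j i with hji | hij
    · exact ((hf.comp (ih j hji)).const_smul (a i j))
    · simp [ha i j hij]

variable [NormedAddCommGroup F] [InnerProductSpace ℝ F]

theorem inner_rk_stage_of_inner_self_eq_zero (hf : ∀ v, ⟪f v, v⟫ = 0) {u₀ : F} {h : ℝ}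
    {y : Fin s → F} {i : Fin s} (hy : y i = u₀ + h • ∑ j, a i j • f (y j)) :
    ⟪f (y i), u₀⟫ = -h * ∑ j, a i j * ⟪f (y i), f (y j)⟫ := by
  have hu₀ : u₀ = y i - h • ∑ j, a i j • f (y j) := by rw [hy]; abel
  rw [hu₀, inner_sub_right, hf, real_inner_smul_right, inner_sum]
  simp only [real_inner_smul_right]
  ring

theorem norm_sq_sub_inner_rk_update_of_inner_self_eq_zero (hf : ∀ v, ⟪f v, v⟫ = 0)
    (b : Fin s → ℝ) {u₀ : F} {h : ℝ} {y : Fin s → F}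
    (hy : ∀ i, y i = u₀ + h • ∑ j, a i j • f (y j)) :
    ‖u₀‖ ^ 2 - ⟪u₀ + h • ∑ i, b i • f (y i), u₀⟫
      = h ^ 2 * ∑ i, b i * ∑ j, a i j * ⟪f (y i), f (y j)⟫ := by
  rw [inner_add_left, real_inner_self_eq_norm_sq, real_inner_smul_left, sum_inner]
  simp only [real_inner_smul_left, inner_rk_stage_of_inner_self_eq_zero hf (hy _),
    mul_left_comm (b _) (-h), ← Finset.mul_sum]
  ring

end RungeKutta

theorem inner_J_self {d : ℕ} (u : E d) : ⟪J d u, u⟫ = 0 := by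
  simp only [J, WithLp.prod_inner_apply, inner_neg_left, real_inner_comm u.ofLp.1]
  ring

theorem norm_J {d : ℕ} (u : E d) : ‖J d u‖ = ‖u‖ := by
  simp [J, WithLp.prod_norm_eq_of_L2, add_comm]

theorem differentiable_J (d : ℕ) : Differentiable ℝ (J d) := by
  let e := WithLp.prodContinuousLinearEquiv 2 ℝ (EuclideanSpace ℝ (Fin d))
    (EuclideanSpace ℝ (Fin d))
  change Differentiable ℝ fun u => e.symm ((e u).2, -(e u).1)
  fun_prop

theorem differentiable_smul_J {d : ℕ} {g : ℝ → ℝ} (hg : Differentiable ℝ g) :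
    Differentiable ℝ fun u : E d => g (‖u‖ ^ 2 / 2) • J d u := by
  have hnorm : Differentiable ℝ fun u : E d => ‖u‖ ^ 2 := differentiable_id.norm_sq ℝ
  have hJ := differentiable_J d
  fun_prop

theorem DifferentiableAt.isBigO_sq_mul_sub {φ : ℝ → ℝ} (hφ : DifferentiableAt ℝ φ 0) :
    (fun h : ℝ => h ^ 2 * (φ h - φ 0)) =O[𝓝 0] fun h => h ^ 3 := by
  have hlin : (fun h : ℝ => φ h - φ 0) =O[𝓝 0] fun h => h := by
    simpa using hφ.hasFDerivAt.isBigO_sub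
  exact ((isBigO_refl (fun h : ℝ => h ^ 2) _).mul hlin).congr_right fun h => by ring

theorem rk_numerator_expansion_euclidean_hamiltonian_general
    (d : ℕ) (g : ℝ → ℝ) (hg : ContDiff ℝ 2 g)
    (f : E d → E d) (hf : ∀ u : E d, f u = g (‖u‖ ^ 2 / 2) • J d u)
    (s : ℕ) (a : Fin s → Fin s → ℝ) (ha : ∀ i j : Fin s, i ≤ j → a i j = 0)
    (b : Fin s → ℝ) (hb2 : ∑ i, b i * (∑ j, a i j) = 1 / 2)
    (u₀ : E d) (y : ℝ → Fin s → E d)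
    (hy : ∀ (h : ℝ) (i : Fin s), y h i = u₀ + h • ∑ j, a i j • f (y h j))
    (uplus : ℝ → E d) (hup : ∀ h : ℝ, uplus h = u₀ + h • ∑ i, b i • f (y h i)) :
    (fun h : ℝ => 2 * ‖u₀‖ ^ 2 - 2 * ⟪uplus h, u₀⟫
        - g (‖u₀‖ ^ 2 / 2) ^ 2 * ‖u₀‖ ^ 2 * h ^ 2)
      =O[𝓝 (0 : ℝ)] fun h : ℝ => h ^ 3 := by
  have hf_orth : ∀ u, ⟪f u, u⟫ = 0 := fun u => by
    rw [hf, real_inner_smul_left, inner_J_self, mul_zero]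
  have hf_diff : Differentiable ℝ f :=
    funext hf ▸ differentiable_smul_J (hg.differentiable (by norm_num))
  set S : ℝ → ℝ := fun h => ∑ i, b i * ∑ j, a i j * ⟪f (y h i), f (y h j)⟫
  have hS_diff : DifferentiableAt ℝ S 0 := by
    have hfy_diff i : DifferentiableAt ℝ (fun h => f (y h i)) 0 :=
      hf_diff.differentiableAt.comp 0 (differentiable_explicit_rk_stage hf_diff ha hy i 0)
    refine .fun_sum fun i _ => .const_mul (.fun_sum fun j _ => ?_) _
    exact ((hfy_diff i).inner ℝ (hfy_diff j)).const_mul _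
  have hS₀ : S 0 = g (‖u₀‖ ^ 2 / 2) ^ 2 * ‖u₀‖ ^ 2 / 2 := by
    have hy₀ : ∀ i, y 0 i = u₀ := fun i => by simpa using hy 0 i
    simp only [S, hy₀, ← Finset.sum_mul, real_inner_self_eq_norm_sq, hf, norm_smul, norm_J,
      Real.norm_eq_abs, mul_pow, sq_abs, ← mul_assoc, hb2]
    ring
  calc (fun h : ℝ => 2 * ‖u₀‖ ^ 2 - 2 * ⟪uplus h, u₀⟫ - g (‖u₀‖ ^ 2 / 2) ^ 2 * ‖u₀‖ ^ 2 * h ^ 2)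
      = fun h => 2 * (h ^ 2 * (S h - S 0)) := by
        ext h
        have hnum := norm_sq_sub_inner_rk_update_of_inner_self_eq_zero hf_orth b (hy h)
        rw [hup, hS₀]
        linear_combination 2 * hnum
    _ =O[𝓝 0] fun h => h ^ 3 := hS_diff.isBigO_sq_mul_sub.const_mul_left 2

/-- For the Euclidean Hamiltonian vector field `f(u) = g(‖u‖²/2) • J u` (`g` of class
`C²`) and an explicit Runge–Kutta method satisfying the second-order conditions
`∑ᵢ bᵢ = 1` and `∑ᵢ bᵢ cᵢ = 1/2`, the update `u₊(h)` satisfies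
`2‖u₀‖² - 2⟪u₊(h), u₀⟫ = g(‖u₀‖²/2)² ‖u₀‖² h² + O(h³)` as `h → 0`. -/
theorem rk_numerator_expansion_euclidean_hamiltonian
    (d : ℕ) (hd : 1 ≤ d) (g : ℝ → ℝ) (hg : ContDiff ℝ 2 g)
    (f : E d → E d) (hf : ∀ u : E d, f u = g (‖u‖ ^ 2 / 2) • J d u)
    (s : ℕ) (a : Fin s → Fin s → ℝ) (ha : ∀ i j : Fin s, i ≤ j → a i j = 0)
    (b : Fin s → ℝ) (hb1 : ∑ i, b i = 1) (hb2 : ∑ i, b i * (∑ j, a i j) = 1 / 2)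
    (u₀ : E d) (y : ℝ → Fin s → E d)
    (hy : ∀ (h : ℝ) (i : Fin s), y h i = u₀ + h • ∑ j, a i j • f (y h j))
    (uplus : ℝ → E d) (hup : ∀ h : ℝ, uplus h = u₀ + h • ∑ i, b i • f (y h i)) :
    (fun h : ℝ => 2 * ‖u₀‖ ^ 2 - 2 * ⟪uplus h, u₀⟫
        - g (‖u₀‖ ^ 2 / 2) ^ 2 * ‖u₀‖ ^ 2 * h ^ 2)
      =O[𝓝 (0 : ℝ)] fun h : ℝ => h ^ 3 :=
  rk_numerator_expansion_euclidean_hamiltonian_general d g hg f hf s a ha b hb2 u₀ y hy uplus hup
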